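/- arXiv:2604.24047 — 6 statements merged into one kernel-verified Lean document; each statement's English description precedes it below -/
import Mathlib

section
/- Let F be a real Hilbert space, U ⊆ F a nonempty open convex set, and Φ : F → ℝ Fréchet differentiable and strictly convex on U. Let X be an F-valued Bochner-integrable random element with X ∈ U almost surely, E‖X‖ < ∞, E|Φ(X)| < ∞, and Bochner mean f̄ = E[X] ∈ U, and suppose E[d_Φ(X,g)] is finite for all g ∈ U. Then f̄ is the unique minimiser over U of the map g ↦ E[d_Φ(X,g)]. -/
/-!
Taking expectations in `d_Φ(X, g) = Φ(X) − Φ(g) − ⟪∇Φ(g), X − g⟫`, which is affine in `X` apart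
from `Φ(X)`, gives the decomposition `E d_Φ(X, g) = E d_Φ(X, f̄) + d_Φ(f̄, g)`. By the first-order
characterisation of (strict) convexity, `d_Φ(f̄, g) ≥ 0`, with strict inequality for `g ≠ f̄`.
-/

open scoped RealInnerProductSpace
open MeasureTheory

/-- The functional Bregman divergence `d_Φ(f,g) = Φ(f) − Φ(g) − ⟪∇Φ(g), f − g⟫`. -/
noncomputable def bregmanDiv {F : Type*} [NormedAddCommGroup F] [InnerProductSpace ℝ F]
    (Φ : F → ℝ) (Φ' : F → F) (f g : F) : ℝ :=
  Φ f - Φ g - ⟪Φ' g, f - g⟫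

theorem StrictConvexOn.comp_affineMap {𝕜 E F β : Type*} [Field 𝕜] [LinearOrder 𝕜]
    [IsStrictOrderedRing 𝕜] [AddCommGroup E] [AddCommGroup F] [Module 𝕜 E] [Module 𝕜 F]
    [AddCommMonoid β] [PartialOrder β] [SMul 𝕜 β] {f : F → β} {s : Set F} {g : E →ᵃ[𝕜] F}
    (hg : Function.Injective g) (hf : StrictConvexOn 𝕜 s f) :
    StrictConvexOn 𝕜 (g ⁻¹' s) (f ∘ g) :=
  ⟨hf.1.affine_preimage g, fun _ hx _ hy hxy _ _ ha hb hab => by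
    simpa only [Function.comp_apply, Convex.combo_affine_apply hab] using
      hf.2 hx hy (hg.ne hxy) ha hb hab⟩

section FirstOrder

variable {E : Type*} [NormedAddCommGroup E] [NormedSpace ℝ E] {s : Set E} {f : E → ℝ}
  {f' : E →L[ℝ] ℝ} {x y : E}

theorem hasDerivAt_comp_lineMap_zero (hf' : HasFDerivAt f f' x) :
    HasDerivAt (f ∘ AffineMap.lineMap (k := ℝ) x y) (f' (y - x)) 0 :=
  (by simpa using hf' : HasFDerivAt f f' (AffineMap.lineMap x y (0 : ℝ))).comp_hasDerivAt 0
    AffineMap.hasDerivAt_lineMap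

theorem slope_comp_lineMap_zero_one :
    slope (f ∘ AffineMap.lineMap (k := ℝ) x y) 0 1 = f y - f x := by
  simp [slope_def_field]

theorem ConvexOn.add_fderiv_sub_le (hf : ConvexOn ℝ s f) (hx : x ∈ s) (hy : y ∈ s)
    (hf' : HasFDerivAt f f' x) : f x + f' (y - x) ≤ f y := by
  have := (hf.comp_affineMap (AffineMap.lineMap x y)).le_slope_of_hasDerivAt
    (by simpa using hx) (by simpa using hy) one_pos (hasDerivAt_comp_lineMap_zero hf')
  rw [slope_comp_lineMap_zero_one] at this
  linarith

theorem StrictConvexOn.add_fderiv_sub_lt (hf : StrictConvexOn ℝ s f) (hx : x ∈ s) (hy : y ∈ s)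
    (hxy : x ≠ y) (hf' : HasFDerivAt f f' x) : f x + f' (y - x) < f y := by
  have := (hf.comp_affineMap (AffineMap.lineMap_injective ℝ hxy)).lt_slope_of_hasDerivAt
    (by simpa using hx) (by simpa using hy) one_pos (hasDerivAt_comp_lineMap_zero hf')
  rw [slope_comp_lineMap_zero_one] at this
  linarith

end FirstOrder

section Bregman

variable {F : Type*} [NormedAddCommGroup F] [InnerProductSpace ℝ F] [CompleteSpace F]
  {U : Set F} {Φ : F → ℝ} {Φ' : F → F} {f g : F}

theorem bregmanDiv_nonneg (hΦ : ConvexOn ℝ U Φ) (hg : g ∈ U) (hf : f ∈ U)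
    (hΦ' : HasGradientAt Φ (Φ' g) g) : 0 ≤ bregmanDiv Φ Φ' f g := by
  have := hΦ.add_fderiv_sub_le hg hf hΦ'.hasFDerivAt
  rw [InnerProductSpace.toDual_apply_apply] at this
  unfold bregmanDiv
  linarith

theorem bregmanDiv_pos (hΦ : StrictConvexOn ℝ U Φ) (hg : g ∈ U) (hf : f ∈ U) (hgf : g ≠ f)
    (hΦ' : HasGradientAt Φ (Φ' g) g) : 0 < bregmanDiv Φ Φ' f g := by
  have := hΦ.add_fderiv_sub_lt hg hf hgf hΦ'.hasFDerivAt
  rw [InnerProductSpace.toDual_apply_apply] at this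
  unfold bregmanDiv
  linarith

variable {Ω : Type*} [MeasurableSpace Ω] {P : Measure Ω} [IsProbabilityMeasure P] {X : Ω → F}

theorem integral_bregmanDiv (hX : Integrable X P) (hΦX : Integrable (fun ω => Φ (X ω)) P)
    (g : F) :
    ∫ ω, bregmanDiv Φ Φ' (X ω) g ∂P = ∫ ω, Φ (X ω) ∂P - Φ g - ⟪Φ' g, (∫ ω, X ω ∂P) - g⟫ := by
  have hΦXg : Integrable (fun ω => Φ (X ω) - Φ g) P := hΦX.sub (integrable_const _)
  have hXg : Integrable (fun ω => X ω - g) P := hX.sub (integrable_const g)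
  unfold bregmanDiv
  rw [integral_sub hΦXg (hXg.const_inner (Φ' g)),
    integral_sub hΦX (integrable_const _), integral_inner hXg, integral_sub hX (integrable_const _)]
  simp

theorem integral_bregmanDiv_eq_integral_bregmanDiv_mean_add (hX : Integrable X P)
    (hΦX : Integrable (fun ω => Φ (X ω)) P) (g : F) :
    ∫ ω, bregmanDiv Φ Φ' (X ω) g ∂P =
      ∫ ω, bregmanDiv Φ Φ' (X ω) (∫ ω, X ω ∂P) ∂P + bregmanDiv Φ Φ' (∫ ω, X ω ∂P) g := by
  rw [integral_bregmanDiv hX hΦX, integral_bregmanDiv hX hΦX, bregmanDiv, sub_self,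
    inner_zero_right]
  ring

end Bregman

theorem bregman_mean_as_minimiser_general
    {F : Type*} [NormedAddCommGroup F] [InnerProductSpace ℝ F] [CompleteSpace F]
    {Ω : Type*} [MeasurableSpace Ω] (P : Measure Ω) [IsProbabilityMeasure P]
    (U : Set F)
    (Φ : F → ℝ) (Φ' : F → F)
    (hdiff : ∀ x ∈ U, HasGradientAt Φ (Φ' x) x)
    (hconv : StrictConvexOn ℝ U Φ)
    (X : Ω → F)
    (hXint : Integrable X P)
    (hΦX : Integrable (fun ω => Φ (X ω)) P)
    (fbar : F) (hfbar : fbar = ∫ ω, X ω ∂P) (hfbarU : fbar ∈ U) :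
    (∀ g ∈ U, ∫ ω, bregmanDiv Φ Φ' (X ω) fbar ∂P ≤ ∫ ω, bregmanDiv Φ Φ' (X ω) g ∂P) ∧
      ∀ g ∈ U, g ≠ fbar →
        ∫ ω, bregmanDiv Φ Φ' (X ω) fbar ∂P < ∫ ω, bregmanDiv Φ Φ' (X ω) g ∂P := by
  subst hfbar
  refine ⟨fun g hg => ?_, fun g hg hne => ?_⟩ <;>
    rw [integral_bregmanDiv_eq_integral_bregmanDiv_mean_add hXint hΦX g]
  · linarith [bregmanDiv_nonneg hconv.convexOn hg hfbarU (hdiff g hg)]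
  · linarith [bregmanDiv_pos hconv hg hfbarU hne (hdiff g hg)]

/-- Mean-as-minimiser: let `Φ` be Fréchet differentiable (with Riesz gradient `Φ'`) and
strictly convex on a nonempty open convex set `U` of a real Hilbert space, and let `X` be a
Bochner-integrable random element with `X ∈ U` a.s., `Φ(X)` integrable, Bochner mean
`f̄ = E[X] ∈ U`, and `E[d_Φ(X,g)]` finite for all `g ∈ U`. Then `f̄` is the unique
minimiser over `U` of `g ↦ E[d_Φ(X,g)]`. -/
theorem bregman_mean_as_minimiser
    {F : Type*} [NormedAddCommGroup F] [InnerProductSpace ℝ F] [CompleteSpace F]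
    {Ω : Type*} [MeasurableSpace Ω] (P : Measure Ω) [IsProbabilityMeasure P]
    (U : Set F) (hU : IsOpen U) (hUconv : Convex ℝ U) (hUne : U.Nonempty)
    (Φ : F → ℝ) (Φ' : F → F)
    (hdiff : ∀ x ∈ U, HasGradientAt Φ (Φ' x) x)
    (hconv : StrictConvexOn ℝ U Φ)
    (X : Ω → F)
    (hXint : Integrable X P)
    (hXU : ∀ᵐ ω ∂P, X ω ∈ U)
    (hΦX : Integrable (fun ω => Φ (X ω)) P)
    (fbar : F) (hfbar : fbar = ∫ ω, X ω ∂P) (hfbarU : fbar ∈ U)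
    (hint : ∀ g ∈ U, Integrable (fun ω => bregmanDiv Φ Φ' (X ω) g) P) :
    (∀ g ∈ U, ∫ ω, bregmanDiv Φ Φ' (X ω) fbar ∂P ≤ ∫ ω, bregmanDiv Φ Φ' (X ω) g ∂P) ∧
      ∀ g ∈ U, g ≠ fbar →
        ∫ ω, bregmanDiv Φ Φ' (X ω) fbar ∂P < ∫ ω, bregmanDiv Φ Φ' (X ω) g ∂P :=
  bregman_mean_as_minimiser_general P U Φ Φ' hdiff hconv X hXint hΦX fbar hfbar hfbarU
end

section
/- Let F be a real Hilbert space, U, V ⊆ F nonempty open convex sets, and Φ, Ψ : F → ℝ Fréchet differentiable with Ψ strictly convex on V. Suppose ∇Φ : U → V is a bijection with inverse ∇Ψ restricted to V, and that the Fenchel–Young equality Φ(f) + Ψ(∇Φ(f)) = ⟨f, ∇Φ(f)⟩ holds for all f ∈ U. Let X be an F-valued random element with X ∈ U almost surely such that Z = ∇Φ(X) is Bochner integrable with Bochner mean z̄ = E[Z] ∈ V, Ψ(Z) is integrable, and E[d_Ψ(Z, v)] is finite for all v ∈ V. Then g ↦ E[d_Φ(g, X)] admits the unique minimiser over U given by the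 quasi-arithmetic mean g* = ∇Ψ(z̄) = (∇Φ)⁻¹(E[∇Φ(X)]). -/
/-!
By the Fenchel–Young equality, `d_Φ(g, x) = d_Ψ(∇Φ x, ∇Φ g)`, so the risk of `g` is the expected
dual divergence `E[d_Ψ(Z, ∇Φ g)]` with `Z = ∇Φ X`. In the dual picture the mean is the Bregman
centroid: `E[d_Ψ(Z, v)] = E[d_Ψ(Z, z̄)] + d_Ψ(z̄, v)` for every `v`, and the excess `d_Ψ(z̄, v)`
is positive for `v ≠ z̄` by strict convexity of `Ψ`. Hence the risk is uniquely minimised where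
`∇Φ g = z̄`, that is at `g = ∇Ψ z̄`.
-/

open scoped RealInnerProductSpace
open MeasureTheory

theorem StrictConvexOn.comp_affineMap_of_injective {E F : Type*} [AddCommGroup E] [Module ℝ E]
    [AddCommGroup F] [Module ℝ F] {s : Set F} {Ψ : F → ℝ} (hΨ : StrictConvexOn ℝ s Ψ)
    (L : E →ᵃ[ℝ] F) (hL : Function.Injective L) :
    StrictConvexOn ℝ (L ⁻¹' s) (Ψ ∘ L) :=
  ⟨hΨ.1.affine_preimage L, fun x hx y hy hxy a b ha hb hab => by
    simpa only [Function.comp, Convex.combo_affine_apply hab] using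
      hΨ.2 hx hy (hL.ne hxy) ha hb hab⟩

section Gradient

variable {F : Type*} [NormedAddCommGroup F] [InnerProductSpace ℝ F] [CompleteSpace F]
  {s : Set F} {Ψ : F → ℝ} {f g v : F}

theorem HasGradientAt.hasDerivAt_comp_lineMap (hgrad : HasGradientAt Ψ v g) (f : F) :
    HasDerivAt (Ψ ∘ AffineMap.lineMap (k := ℝ) g f) ⟪v, f - g⟫ 0 :=
  hgrad.hasFDerivAt.comp_hasDerivAt_of_eq 0 AffineMap.hasDerivAt_lineMap
    (AffineMap.lineMap_apply_zero g f).symm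

theorem ConvexOn.inner_le_sub_of_hasGradientAt (hΨ : ConvexOn ℝ s Ψ)
    (hgrad : HasGradientAt Ψ v g) (hf : f ∈ s) (hg : g ∈ s) :
    ⟪v, f - g⟫ ≤ Ψ f - Ψ g := by
  have := (hΨ.comp_affineMap (AffineMap.lineMap (k := ℝ) g f)).le_slope_of_hasDerivAt (x := 0) (y := 1)
    (by simpa using hg) (by simpa using hf) one_pos (HasGradientAt.hasDerivAt_comp_lineMap hgrad f)
  simpa [slope_def_field] using this

theorem StrictConvexOn.inner_lt_sub_of_hasGradientAt (hΨ : StrictConvexOn ℝ s Ψ)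
    (hgrad : HasGradientAt Ψ v g) (hf : f ∈ s) (hg : g ∈ s) (hfg : f ≠ g) :
    ⟪v, f - g⟫ < Ψ f - Ψ g := by
  have hline := hΨ.comp_affineMap_of_injective (AffineMap.lineMap (k := ℝ) g f)
    (AffineMap.lineMap_injective ℝ hfg.symm)
  have := hline.lt_slope_of_hasDerivAt (x := 0) (y := 1) (by simpa using hg) (by simpa using hf)
    one_pos (HasGradientAt.hasDerivAt_comp_lineMap hgrad f)
  simpa [slope_def_field] using this

end Gradient

section Bregman

variable {F : Type*} [NormedAddCommGroup F] [InnerProductSpace ℝ F]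
  {Φ Ψ : F → ℝ} {Φ' Ψ' : F → F}

@[simp]
theorem bregmanDiv_self (f : F) : bregmanDiv Ψ Ψ' f f = 0 := by
  simp [bregmanDiv]

theorem bregmanDiv_nonneg_s7 [CompleteSpace F] {s : Set F} {f g : F} (hΨ : ConvexOn ℝ s Ψ)
    (hgrad : HasGradientAt Ψ (Ψ' g) g) (hf : f ∈ s) (hg : g ∈ s) :
    0 ≤ bregmanDiv Ψ Ψ' f g :=
  sub_nonneg.2 (hΨ.inner_le_sub_of_hasGradientAt hgrad hf hg)

theorem bregmanDiv_pos_s7 [CompleteSpace F] {s : Set F} {f g : F} (hΨ : StrictConvexOn ℝ s Ψ)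
    (hgrad : HasGradientAt Ψ (Ψ' g) g) (hf : f ∈ s) (hg : g ∈ s) (hfg : f ≠ g) :
    0 < bregmanDiv Ψ Ψ' f g :=
  sub_pos.2 (hΨ.inner_lt_sub_of_hasGradientAt hgrad hf hg hfg)

theorem bregmanDiv_eq_bregmanDiv_of_fenchelYoung {g x : F}
    (hFYg : Φ g + Ψ (Φ' g) = ⟪g, Φ' g⟫) (hFYx : Φ x + Ψ (Φ' x) = ⟪x, Φ' x⟫)
    (hinv : Ψ' (Φ' g) = g) :
    bregmanDiv Φ Φ' g x = bregmanDiv Ψ Ψ' (Φ' x) (Φ' g) := by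
  simp only [bregmanDiv, hinv, inner_sub_right, real_inner_comm x, real_inner_comm g]
  linarith

variable [CompleteSpace F] {Ω : Type*} [MeasurableSpace Ω] {P : Measure Ω}
  [IsProbabilityMeasure P] {Z : Ω → F}

theorem integral_bregmanDiv_const_right (hZ : Integrable Z P)
    (hΨZ : Integrable (fun ω => Ψ (Z ω)) P) (v : F) :
    ∫ ω, bregmanDiv Ψ Ψ' (Z ω) v ∂P = ∫ ω, Ψ (Z ω) ∂P - Ψ v - ⟪Ψ' v, ∫ ω, Z ω ∂P - v⟫ := by
  have hZv : Integrable (fun ω => Z ω - v) P := hZ.sub (integrable_const v)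
  have hΨZv : Integrable (fun ω => Ψ (Z ω) - Ψ v) P := hΨZ.sub (integrable_const _)
  have hinner : ∫ ω, ⟪Ψ' v, Z ω - v⟫ ∂P = ⟪Ψ' v, ∫ ω, Z ω ∂P - v⟫ := by
    rw [integral_inner hZv, integral_sub hZ (integrable_const v), integral_const,
      probReal_univ, one_smul]
  simp only [bregmanDiv]
  rw [integral_sub hΨZv (hZv.const_inner _), integral_sub hΨZ (integrable_const _),
    integral_const, probReal_univ, one_smul, hinner]

theorem integral_bregmanDiv_eq_integral_bregmanDiv_integral_add (hZ : Integrable Z P)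
    (hΨZ : Integrable (fun ω => Ψ (Z ω)) P) (v : F) :
    ∫ ω, bregmanDiv Ψ Ψ' (Z ω) v ∂P
      = ∫ ω, bregmanDiv Ψ Ψ' (Z ω) (∫ ω, Z ω ∂P) ∂P + bregmanDiv Ψ Ψ' (∫ ω, Z ω ∂P) v := by
  rw [integral_bregmanDiv_const_right hZ hΨZ, integral_bregmanDiv_const_right hZ hΨZ]
  simp only [bregmanDiv, sub_self, inner_zero_right]
  ring

end Bregman

theorem bregman_quasi_arithmetic_mean_minimiser_general
    {F : Type*} [NormedAddCommGroup F] [InnerProductSpace ℝ F] [CompleteSpace F]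
    {Ω : Type*} [MeasurableSpace Ω] (P : Measure Ω) [IsProbabilityMeasure P]
    (U V : Set F)
    (Φ Ψ : F → ℝ) (Φ' Ψ' : F → F)
    (hΨ : ∀ y ∈ V, HasGradientAt Ψ (Ψ' y) y)
    (hΨconv : StrictConvexOn ℝ V Ψ)
    (hmapΦ : Set.MapsTo Φ' U V) (hmapΨ : Set.MapsTo Ψ' V U)
    (hinv₁ : ∀ x ∈ U, Ψ' (Φ' x) = x) (hinv₂ : ∀ y ∈ V, Φ' (Ψ' y) = y)
    (hFY : ∀ x ∈ U, Φ x + Ψ (Φ' x) = ⟪x, Φ' x⟫)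
    (X : Ω → F)
    (hXU : ∀ᵐ ω ∂P, X ω ∈ U)
    (hZint : Integrable (fun ω => Φ' (X ω)) P)
    (zbar : F) (hzbar : zbar = ∫ ω, Φ' (X ω) ∂P) (hzbarV : zbar ∈ V)
    (hΨZ : Integrable (fun ω => Ψ (Φ' (X ω))) P) :
    Ψ' zbar ∈ U ∧
      (∀ g ∈ U, ∫ ω, bregmanDiv Φ Φ' (Ψ' zbar) (X ω) ∂P
          ≤ ∫ ω, bregmanDiv Φ Φ' g (X ω) ∂P) ∧
      ∀ g ∈ U, g ≠ Ψ' zbar →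
        ∫ ω, bregmanDiv Φ Φ' (Ψ' zbar) (X ω) ∂P
          < ∫ ω, bregmanDiv Φ Φ' g (X ω) ∂P := by
  have hstar : Ψ' zbar ∈ U := hmapΨ hzbarV
  have hrisk : ∀ g ∈ U, ∫ ω, bregmanDiv Φ Φ' g (X ω) ∂P
      = ∫ ω, bregmanDiv Ψ Ψ' (Φ' (X ω)) zbar ∂P + bregmanDiv Ψ Ψ' zbar (Φ' g) := by
    intro g hg
    rw [integral_congr_ae (hXU.mono fun ω hω =>
      bregmanDiv_eq_bregmanDiv_of_fenchelYoung (hFY g hg) (hFY (X ω) hω) (hinv₁ g hg)), hzbar]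
    exact integral_bregmanDiv_eq_integral_bregmanDiv_integral_add hZint hΨZ _
  have hrisk_star : ∫ ω, bregmanDiv Φ Φ' (Ψ' zbar) (X ω) ∂P
      = ∫ ω, bregmanDiv Ψ Ψ' (Φ' (X ω)) zbar ∂P := by
    rw [hrisk _ hstar, hinv₂ zbar hzbarV, bregmanDiv_self, add_zero]
  refine ⟨hstar, fun g hg => ?_, fun g hg hne => ?_⟩
  · rw [hrisk_star, hrisk g hg]
    exact le_add_of_nonneg_right
      (bregmanDiv_nonneg_s7 hΨconv.convexOn (hΨ _ (hmapΦ hg)) hzbarV (hmapΦ hg))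
  · have hgrad_ne : zbar ≠ Φ' g := fun h => hne (by rw [← hinv₁ g hg, ← h])
    rw [hrisk_star, hrisk g hg]
    exact lt_add_of_pos_right _
      (bregmanDiv_pos_s7 hΨconv (hΨ _ (hmapΦ hg)) hzbarV (hmapΦ hg) hgrad_ne)

/-- Quasi-arithmetic mean as the left minimiser of expected Bregman risk. Let `Φ` be a
Legendre-type generator on a nonempty open convex set `U` of a real Hilbert space, with
convex conjugate `Ψ` Fréchet differentiable and strictly convex on a nonempty open convex
set `V`, gradient maps `Φ' : U → V` and `Ψ' : V → U` mutually inverse bijections, and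
Fenchel–Young equality `Φ(f) + Ψ(∇Φ(f)) = ⟪f, ∇Φ(f)⟫` on `U`. Let `X ∈ U` a.s. with
`Z = ∇Φ(X)` Bochner integrable, `z̄ = E[Z] ∈ V`, `Ψ(Z)` integrable, and `E[d_Ψ(Z,v)]`
finite for all `v ∈ V`. Then `g* = ∇Ψ(z̄) = (∇Φ)⁻¹(E[∇Φ(X)])` is the unique minimiser
over `U` of `g ↦ E[d_Φ(g, X)]`. -/
theorem bregman_quasi_arithmetic_mean_minimiser
    {F : Type*} [NormedAddCommGroup F] [InnerProductSpace ℝ F] [CompleteSpace F]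
    {Ω : Type*} [MeasurableSpace Ω] (P : Measure Ω) [IsProbabilityMeasure P]
    (U V : Set F)
    (hU : IsOpen U) (hUconv : Convex ℝ U) (hUne : U.Nonempty)
    (hV : IsOpen V) (hVconv : Convex ℝ V) (hVne : V.Nonempty)
    (Φ Ψ : F → ℝ) (Φ' Ψ' : F → F)
    (hΦ : ∀ x ∈ U, HasGradientAt Φ (Φ' x) x)
    (hΨ : ∀ y ∈ V, HasGradientAt Ψ (Ψ' y) y)
    (hΨconv : StrictConvexOn ℝ V Ψ)
    (hmapΦ : Set.MapsTo Φ' U V) (hmapΨ : Set.MapsTo Ψ' V U)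
    (hinv₁ : ∀ x ∈ U, Ψ' (Φ' x) = x) (hinv₂ : ∀ y ∈ V, Φ' (Ψ' y) = y)
    (hFY : ∀ x ∈ U, Φ x + Ψ (Φ' x) = ⟪x, Φ' x⟫)
    (X : Ω → F)
    (hXU : ∀ᵐ ω ∂P, X ω ∈ U)
    (hZint : Integrable (fun ω => Φ' (X ω)) P)
    (zbar : F) (hzbar : zbar = ∫ ω, Φ' (X ω) ∂P) (hzbarV : zbar ∈ V)
    (hΨZ : Integrable (fun ω => Ψ (Φ' (X ω))) P)
    (hint : ∀ v ∈ V, Integrable (fun ω => bregmanDiv Ψ Ψ' (Φ' (X ω)) v) P) :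
    Ψ' zbar ∈ U ∧
      (∀ g ∈ U, ∫ ω, bregmanDiv Φ Φ' (Ψ' zbar) (X ω) ∂P
          ≤ ∫ ω, bregmanDiv Φ Φ' g (X ω) ∂P) ∧
      ∀ g ∈ U, g ≠ Ψ' zbar →
        ∫ ω, bregmanDiv Φ Φ' (Ψ' zbar) (X ω) ∂P
          < ∫ ω, bregmanDiv Φ Φ' g (X ω) ∂P :=
  bregman_quasi_arithmetic_mean_minimiser_general P U V Φ Ψ Φ' Ψ' hΨ hΨconv hmapΦ hmapΨ hinv₁ hinv₂
    hFY X hXU hZint zbar hzbar hzbarV hΨZ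
end

section
/- Let F be a real Hilbert space, A ⊆ F a nonempty open convex set, and Φ : F → ℝ twice continuously Fréchet differentiable and strictly convex on A. Then the following are equivalent: (1) d_Φ(f,g) = d_Φ(g,f) for all f, g ∈ A; (2) there exist a bounded self-adjoint strictly positive continuous linear operator T : F → F (meaning ⟨f, Tf⟩ > 0 for all f ≠ 0), an element b ∈ F, and c ∈ ℝ such that Φ(f) = (1/2)⟨f, Tf⟩ + ⟨b, f⟩ + c for all f ∈ A; (3) there exists a bounded self-adjoint strictly positive continuous linear operator T : F → F such that d_Φ(f,g) = (1/2)⟨f − g, T(f − g)⟩ for all f, g ∈ A. -/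
open scoped RealInnerProductSpace
open Filter Topology InnerProductSpace

/-!
Symmetry of `d_Φ` says that the trapezoid rule `Φ f - Φ g = ½ (DΦ f + DΦ g) (f - g)` is exact.
Differentiating it in `f` shows that `DΦ` is affine with slope `D²Φ`, so on `A` the function `Φ`
coincides with its second-order Taylor polynomial at any point. The Hessian is symmetric, hence
represented by a self-adjoint `T` through the Riesz isomorphism, and strict convexity of the
quadratic forces `⟪x, T x⟫ > 0`. Conversely, the Bregman divergence of a quadratic is its
(symmetric) quadratic part.
-/

section

variable {E : Type*} [NormedAddCommGroup E] [NormedSpace ℝ E] {A : Set E} {Φ : E → ℝ}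

lemma trapezoid_of_bregman_symm {f g : E}
    (h : Φ f - Φ g - fderiv ℝ Φ g (f - g) = Φ g - Φ f - fderiv ℝ Φ f (g - f)) :
    Φ f - Φ g = (1 / 2) * (fderiv ℝ Φ f (f - g) + fderiv ℝ Φ g (f - g)) := by
  rw [← neg_sub f g, map_neg] at h
  linarith

lemma fderiv_sub_fderiv_of_trapezoid (hA : IsOpen A) (hΦ : ContDiffOn ℝ 2 Φ A)
    (htrap : ∀ f ∈ A, ∀ g ∈ A,
      Φ f - Φ g = (1 / 2) * (fderiv ℝ Φ f (f - g) + fderiv ℝ Φ g (f - g)))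
    {f g : E} (hf : f ∈ A) (hg : g ∈ A) (v : E) :
    fderiv ℝ Φ f v - fderiv ℝ Φ g v = fderiv ℝ (fderiv ℝ Φ) f v (f - g) := by
  have hΦf : ContDiffAt ℝ 2 Φ f := hΦ.contDiffAt (hA.mem_nhds hf)
  have hD : HasFDerivAt Φ (fderiv ℝ Φ f) f := (hΦf.differentiableAt two_ne_zero).hasFDerivAt
  have hD2 : HasFDerivAt (fderiv ℝ Φ) (fderiv ℝ (fderiv ℝ Φ) f) f :=
    ((hΦf.fderiv_right (m := 1) le_rfl).differentiableAt one_ne_zero).hasFDerivAt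
  have hsub : HasFDerivAt (fun x : E => x - g) (ContinuousLinearMap.id ℝ E) f :=
    (hasFDerivAt_id f).sub_const g
  have hrhs := (((hD2.clm_apply hsub).add ((fderiv ℝ Φ g).hasFDerivAt.comp f hsub)).const_mul
    (1 / 2 : ℝ))
  have heq : (fun x => Φ x - Φ g) =ᶠ[𝓝 f]
      fun x => (1 / 2 : ℝ) * (fderiv ℝ Φ x (x - g) + fderiv ℝ Φ g (x - g)) := by
    filter_upwards [hA.mem_nhds hf] with x hx using htrap x hx g hg
  have hv := congr($(((hD.sub_const (Φ g)).congr_of_eventuallyEq heq.symm).unique hrhs) v)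
  simp only [smul_apply, add_apply,
    ContinuousLinearMap.comp_apply, ContinuousLinearMap.flip_apply, ContinuousLinearMap.id_apply,
    smul_eq_mul] at hv
  linarith

lemma eq_taylor_two_of_trapezoid (hA : IsOpen A) (hΦ : ContDiffOn ℝ 2 Φ A)
    (htrap : ∀ f ∈ A, ∀ g ∈ A,
      Φ f - Φ g = (1 / 2) * (fderiv ℝ Φ f (f - g) + fderiv ℝ Φ g (f - g)))
    {f g : E} (hf : f ∈ A) (hg : g ∈ A) :
    Φ f = Φ g + fderiv ℝ Φ g (f - g) + (1 / 2) * fderiv ℝ (fderiv ℝ Φ) g (f - g) (f - g) := by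
  have hD := fderiv_sub_fderiv_of_trapezoid hA hΦ htrap hg hf (f - g)
  rw [← neg_sub f g, map_neg] at hD
  linarith [htrap f hf g hg]

lemma pos_of_strictConvexOn_of_eq_quadratic (hA : IsOpen A) (hconv : StrictConvexOn ℝ A Φ)
    {g : E} (hg : g ∈ A) {c : ℝ} {L : E →L[ℝ] ℝ} {B : E →L[ℝ] E →L[ℝ] ℝ}
    (hΦ : ∀ f ∈ A, Φ f = c + L (f - g) + (1 / 2) * B (f - g) (f - g)) {x : E} (hx : x ≠ 0) :
    0 < B x x := by
  have hline : Tendsto (fun t : ℝ => g + t • x) (𝓝[>] 0) (𝓝 g) := by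
    have : Continuous fun t : ℝ => g + t • x := by fun_prop
    simpa using (this.tendsto 0).mono_left nhdsWithin_le_nhds
  obtain ⟨t, ht, ht0⟩ :=
    ((hline.eventually (hA.mem_nhds hg)).and self_mem_nhdsWithin).exists
  have hne : g + t • x ≠ g := by simpa using And.intro (ne_of_gt ht0) hx
  have hmid := hconv.2 ht hg hne (by norm_num : (0 : ℝ) < 1 / 2)
    (by norm_num : (0 : ℝ) < 1 / 2) (by norm_num)
  have hmid_eq : (1 / 2 : ℝ) • (g + t • x) + (1 / 2 : ℝ) • g = g + (t / 2) • x := by module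
  have hhalf : g + (t / 2) • x ∈ A := hmid_eq ▸ hconv.1 ht hg (by norm_num : (0 : ℝ) ≤ 1 / 2)
    (by norm_num : (0 : ℝ) ≤ 1 / 2) (by norm_num)
  -- the midpoint inequality reads `t² B x x / 8 < t² B x x / 4`
  rw [hmid_eq, hΦ _ hhalf, hΦ _ ht, hΦ _ hg] at hmid
  simp only [add_sub_cancel_left, sub_self, map_smul, map_zero, smul_apply,
    smul_eq_mul] at hmid
  nlinarith [mul_pos ht0 ht0]

end

section

variable {F : Type*} [NormedAddCommGroup F] [InnerProductSpace ℝ F]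

lemma exists_half_inner_of_strictConvexOn_of_eq_quadratic [CompleteSpace F] {A : Set F}
    {Φ : F → ℝ} (hA : IsOpen A) (hconv : StrictConvexOn ℝ A Φ) {g : F} (hg : g ∈ A) {c : ℝ}
    {L : F →L[ℝ] ℝ} {B : F →L[ℝ] F →L[ℝ] ℝ} (hB : ∀ x y, B x y = B y x)
    (hΦ : ∀ f ∈ A, Φ f = c + L (f - g) + (1 / 2) * B (f - g) (f - g)) :
    ∃ T : F →L[ℝ] F, (∀ x y, ⟪T x, y⟫ = ⟪x, T y⟫) ∧ (∀ x, x ≠ 0 → 0 < ⟪x, T x⟫) ∧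
      ∃ b : F, ∃ c' : ℝ, ∀ f ∈ A, Φ f = (1 / 2) * ⟪f, T f⟫ + ⟪b, f⟫ + c' := by
  set T := continuousLinearMapOfBilin (𝕜 := ℝ) B
  have hT : ∀ x y, ⟪x, T y⟫ = B y x := fun x y => by
    rw [real_inner_comm, continuousLinearMapOfBilin_apply]
  refine ⟨T, fun x y => by rw [hT, continuousLinearMapOfBilin_apply, hB], fun x hx => ?_,
    (toDual ℝ F).symm L - T g, c - L g + (1 / 2) * B g g, fun f hf => ?_⟩
  · rw [hT]
    exact pos_of_strictConvexOn_of_eq_quadratic hA hconv hg hΦ hx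
  · rw [hΦ f hf, inner_sub_left, toDual_symm_apply, hT, real_inner_comm, hT]
    simp only [map_sub, sub_apply]
    linarith [hB f g]

lemma hasFDerivAt_half_inner_self_add {T : F →L[ℝ] F} (hT : ∀ x y, ⟪T x, y⟫ = ⟪x, T y⟫)
    (b : F) (c : ℝ) (g : F) :
    HasFDerivAt (fun f => (1 / 2) * ⟪f, T f⟫ + ⟪b, f⟫ + c) (innerSL ℝ (T g + b)) g := by
  refine (((((hasFDerivAt_id g).inner ℝ T.hasFDerivAt).const_mul (1 / 2 : ℝ)).add
    (innerSL ℝ b).hasFDerivAt).add_const c).congr_fderiv ?_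
  ext v
  simp only [id_eq, add_apply, smul_apply, ContinuousLinearMap.comp_apply,
    ContinuousLinearMap.prod_apply, ContinuousLinearMap.id_apply, fderivInnerCLM_apply,
    smul_eq_mul, coe_innerSL_apply, map_add, add_left_inj]
  linarith [hT g v, real_inner_comm v (T g)]

lemma bregman_eq_of_eqOn_half_inner {A : Set F} {Φ : F → ℝ} (hA : IsOpen A) {T : F →L[ℝ] F}
    (hT : ∀ x y, ⟪T x, y⟫ = ⟪x, T y⟫) {b : F} {c : ℝ}
    (hΦ : ∀ f ∈ A, Φ f = (1 / 2) * ⟪f, T f⟫ + ⟪b, f⟫ + c) {f g : F} (hf : f ∈ A) (hg : g ∈ A) :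
    Φ f - Φ g - fderiv ℝ Φ g (f - g) = (1 / 2) * ⟪f - g, T (f - g)⟫ := by
  have hΦg : Φ =ᶠ[𝓝 g] fun f => (1 / 2) * ⟪f, T f⟫ + ⟪b, f⟫ + c :=
    eventually_of_mem (hA.mem_nhds hg) hΦ
  rw [hΦg.fderiv_eq, (hasFDerivAt_half_inner_self_add hT b c g).fderiv, hΦ f hf, hΦ g hg,
    coe_innerSL_apply]
  simp only [inner_sub_left, inner_sub_right, inner_add_left, map_sub]
  linarith [hT g f, hT g g, real_inner_comm f (T g)]

end

theorem bregman_symmetric_tfae_general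
    {F : Type*} [NormedAddCommGroup F] [InnerProductSpace ℝ F] [CompleteSpace F]
    (A : Set F) (hA : IsOpen A) (hAne : A.Nonempty)
    (Φ : F → ℝ)
    (hsmooth : ContDiffOn ℝ 2 Φ A)
    (hconv : StrictConvexOn ℝ A Φ) :
    List.TFAE
      [ ∀ f ∈ A, ∀ g ∈ A,
          Φ f - Φ g - fderiv ℝ Φ g (f - g) = Φ g - Φ f - fderiv ℝ Φ f (g - f),
        ∃ T : F →L[ℝ] F, (∀ x y : F, ⟪T x, y⟫ = ⟪x, T y⟫) ∧
          (∀ x : F, x ≠ 0 → 0 < ⟪x, T x⟫) ∧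
          ∃ b : F, ∃ c : ℝ, ∀ f ∈ A, Φ f = (1/2) * ⟪f, T f⟫ + ⟪b, f⟫ + c,
        ∃ T : F →L[ℝ] F, (∀ x y : F, ⟪T x, y⟫ = ⟪x, T y⟫) ∧
          (∀ x : F, x ≠ 0 → 0 < ⟪x, T x⟫) ∧
          ∀ f ∈ A, ∀ g ∈ A,
            Φ f - Φ g - fderiv ℝ Φ g (f - g) = (1/2) * ⟪f - g, T (f - g)⟫ ] := by
  tfae_have 1 → 2 := by
    intro hsymm
    obtain ⟨g, hg⟩ := hAne
    have htrap := fun f hf g hg => trapezoid_of_bregman_symm (hsymm f hf g hg)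
    exact exists_half_inner_of_strictConvexOn_of_eq_quadratic hA hconv hg
      ((hsmooth.contDiffAt (hA.mem_nhds hg)).isSymmSndFDerivAt (by simp))
      fun f hf => eq_taylor_two_of_trapezoid hA hsmooth htrap hf hg
  tfae_have 2 → 3
  | ⟨T, hT, hTpos, b, c, hΦ⟩ =>
    ⟨T, hT, hTpos, fun _ hf _ hg => bregman_eq_of_eqOn_half_inner hA hT hΦ hf hg⟩
  tfae_have 3 → 1
  | ⟨T, _, _, hΦ⟩ => fun f hf g hg => by
    rw [hΦ f hf g hg, hΦ g hg f hf, ← neg_sub f g, map_neg, inner_neg_neg]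
  tfae_finish

/-- Characterisation of symmetric functional Bregman divergences: for `Φ` twice continuously
Fréchet differentiable and strictly convex on a nonempty open convex subset `A` of a real
Hilbert space, with `d_Φ(f,g) = Φ(f) − Φ(g) − DΦ(g)(f − g)`, the following are equivalent:
(1) `d_Φ` is symmetric on `A`; (2) `Φ` is a quadratic `Φ(f) = ½⟪f,Tf⟫ + ⟪b,f⟫ + c` on `A`
for some bounded self-adjoint strictly positive operator `T`, `b ∈ F`, `c ∈ ℝ`;
(3) `d_Φ(f,g) = ½⟪f−g, T(f−g)⟫` on `A` for such a `T`. -/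
theorem bregman_symmetric_tfae
    {F : Type*} [NormedAddCommGroup F] [InnerProductSpace ℝ F] [CompleteSpace F]
    (A : Set F) (hA : IsOpen A) (hAconv : Convex ℝ A) (hAne : A.Nonempty)
    (Φ : F → ℝ)
    (hsmooth : ContDiffOn ℝ 2 Φ A)
    (hconv : StrictConvexOn ℝ A Φ) :
    List.TFAE
      [ ∀ f ∈ A, ∀ g ∈ A,
          Φ f - Φ g - fderiv ℝ Φ g (f - g) = Φ g - Φ f - fderiv ℝ Φ f (g - f),
        ∃ T : F →L[ℝ] F, (∀ x y : F, ⟪T x, y⟫ = ⟪x, T y⟫) ∧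
          (∀ x : F, x ≠ 0 → 0 < ⟪x, T x⟫) ∧
          ∃ b : F, ∃ c : ℝ, ∀ f ∈ A, Φ f = (1/2) * ⟪f, T f⟫ + ⟪b, f⟫ + c,
        ∃ T : F →L[ℝ] F, (∀ x y : F, ⟪T x, y⟫ = ⟪x, T y⟫) ∧
          (∀ x : F, x ≠ 0 → 0 < ⟪x, T x⟫) ∧
          ∀ f ∈ A, ∀ g ∈ A,
            Φ f - Φ g - fderiv ℝ Φ g (f - g) = (1/2) * ⟪f - g, T (f - g)⟫ ] :=
  bregman_symmetric_tfae_general A hA hAne Φ hsmooth hconv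
end

section
/- Let F be a real Hilbert space, A ⊆ F a nonempty open convex set, Φ : F → ℝ Fréchet differentiable and strictly convex on A, and let A, B : F → F be bounded self-adjoint positive-definite continuous linear operators. Define d^gsb(f,g) = d_Φ(f,g) + d_Φ(g,f) + (1/2)⟨f − g, A(f − g)⟩ + (1/2)⟨∇Φ(f) − ∇Φ(g), B(∇Φ(f) − ∇Φ(g))⟩, and the block operator M on the product Hilbert space F × F by M(u, v) = (Au + v, u + Bv). If M is positive semidefinite on F × F, i.e., ⟨(u,v), M(u,v)⟩ ≥ 0 for all (u,v), then (f,g) ↦ √(d^gsb(f,g)) is a metric on A: it is nonnegative, symmetric, vanishes exactly when f = g, and satisfies the triangle inequality. -/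
open scoped RealInnerProductSpace

/-- The generalised symmetrised Bregman divergence
`d^gsb(f,g) = d_Φ(f,g) + d_Φ(g,f) + ½⟪f−g, A(f−g)⟫ + ½⟪∇Φ(f)−∇Φ(g), B(∇Φ(f)−∇Φ(g))⟫`,
where `d_Φ(f,g) = Φ(f) − Φ(g) − ⟪∇Φ(g), f − g⟫` and `Φ'` is the Riesz gradient of `Φ`. -/
noncomputable def dgsb {F : Type*} [NormedAddCommGroup F] [InnerProductSpace ℝ F]
    (Φ : F → ℝ) (Φ' : F → F) (A B : F →L[ℝ] F) (f g : F) : ℝ :=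
  (Φ f - Φ g - ⟪Φ' g, f - g⟫) + (Φ g - Φ f - ⟪Φ' f, g - f⟫)
    + (1/2) * ⟪f - g, A (f - g)⟫
    + (1/2) * ⟪Φ' f - Φ' g, B (Φ' f - Φ' g)⟫

section Aux

variable {F : Type*} [NormedAddCommGroup F] [InnerProductSpace ℝ F]

/-- The (symmetric) bilinear form associated with the block operator `M(u,v) = (Au+v, u+Bv)`. -/
noncomputable def bqForm (A B : F →L[ℝ] F) (u v u' v' : F) : ℝ :=
  ⟪u, A u'⟫ + ⟪u, v'⟫ + ⟪v, u'⟫ + ⟪v, B v'⟫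

lemma bqForm_self_nonneg (A B : F →L[ℝ] F)
    (hMpsd : ∀ u v : F, 0 ≤ ⟪u, A u + v⟫ + ⟪v, u + B v⟫) (u v : F) :
    0 ≤ bqForm A B u v u v := by
  have := hMpsd u v
  simp only [inner_add_right] at this
  unfold bqForm
  linarith [real_inner_comm u v, real_inner_comm v u]

lemma bqForm_expand (A B : F →L[ℝ] F)
    (hAsa : ∀ x y : F, ⟪A x, y⟫ = ⟪x, A y⟫) (hBsa : ∀ x y : F, ⟪B x, y⟫ = ⟪x, B y⟫)
    (u v u' v' : F) (x : ℝ) :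
    bqForm A B (u + x • u') (v + x • v') (u + x • u') (v + x • v')
      = bqForm A B u v u v + 2 * x * bqForm A B u v u' v'
        + x * x * bqForm A B u' v' u' v' := by
  have h1 : ⟪u', A u⟫ = ⟪u, A u'⟫ := by rw [← hAsa, real_inner_comm]
  have h2 : ⟪v', B v⟫ = ⟪v, B v'⟫ := by rw [← hBsa, real_inner_comm]
  simp only [bqForm, map_add, map_smul, inner_add_left, inner_add_right,
    real_inner_smul_left, real_inner_smul_right]
  linear_combination x * h1 + x * h2 - x * real_inner_comm u' v - x * real_inner_comm v' u

lemma bqForm_cauchy_schwarz (A B : F →L[ℝ] F)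
    (hAsa : ∀ x y : F, ⟪A x, y⟫ = ⟪x, A y⟫) (hBsa : ∀ x y : F, ⟪B x, y⟫ = ⟪x, B y⟫)
    (hMpsd : ∀ u v : F, 0 ≤ ⟪u, A u + v⟫ + ⟪v, u + B v⟫) (u v u' v' : F) :
    bqForm A B u v u' v'
      ≤ Real.sqrt (bqForm A B u v u v) * Real.sqrt (bqForm A B u' v' u' v') := by
  set a := bqForm A B u' v' u' v' with ha
  set c := bqForm A B u v u v with hc
  set b := bqForm A B u v u' v' with hb
  have hd : discrim a (2 * b) c ≤ 0 := by
    apply discrim_le_zero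
    intro x
    have h := bqForm_self_nonneg A B hMpsd (u + x • u') (v + x • v')
    rw [bqForm_expand A B hAsa hBsa u v u' v' x] at h
    nlinarith [h]
  rw [discrim] at hd
  have hb2 : b ^ 2 ≤ c * a := by nlinarith
  have hca : (0:ℝ) ≤ c := bqForm_self_nonneg A B hMpsd u v
  calc b ≤ |b| := le_abs_self b
    _ = Real.sqrt (b ^ 2) := (Real.sqrt_sq_eq_abs b).symm
    _ ≤ Real.sqrt (c * a) := Real.sqrt_le_sqrt hb2
    _ = Real.sqrt c * Real.sqrt a := Real.sqrt_mul hca a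

lemma dgsb_eq_half_bqForm (Φ : F → ℝ) (Φ' : F → F) (A B : F →L[ℝ] F) (f g : F) :
    dgsb Φ Φ' A B f g
      = (1/2) * bqForm A B (f - g) (Φ' f - Φ' g) (f - g) (Φ' f - Φ' g) := by
  simp only [dgsb, bqForm, inner_sub_left, inner_sub_right]
  linarith [real_inner_comm f (Φ' f), real_inner_comm f (Φ' g),
    real_inner_comm g (Φ' f), real_inner_comm g (Φ' g)]

end Aux

section Mono

variable {F : Type*} [NormedAddCommGroup F] [InnerProductSpace ℝ F] [CompleteSpace F]

/-- Gradient monotonicity for a convex function. -/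
lemma grad_mono_of_convexOn {S : Set F} (Φ : F → ℝ) (Φ' : F → F)
    (hdiff : ∀ x ∈ S, HasGradientAt Φ (Φ' x) x) (hconv : ConvexOn ℝ S Φ)
    {f g : F} (hf : f ∈ S) (hg : g ∈ S) :
    0 ≤ ⟪Φ' f - Φ' g, f - g⟫ := by
  set L : ℝ →ᵃ[ℝ] F := AffineMap.lineMap g f with hL
  have hφconv : ConvexOn ℝ (L ⁻¹' S) (Φ ∘ L) := hconv.comp_affineMap L
  have h0 : (0:ℝ) ∈ L ⁻¹' S := by
    simp only [Set.mem_preimage, hL, AffineMap.lineMap_apply_zero]; exact hg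
  have h1 : (1:ℝ) ∈ L ⁻¹' S := by
    simp only [Set.mem_preimage, hL, AffineMap.lineMap_apply_one]; exact hf
  have hLfun : ∀ t : ℝ, L t = t • (f - g) + g := fun t =>
    AffineMap.lineMap_apply_module' g f t
  have hLderiv : ∀ t : ℝ, HasDerivAt (fun s : ℝ => L s) (f - g) t := by
    intro t
    have h : HasDerivAt (fun s : ℝ => s • (f - g) + g) ((1:ℝ) • (f - g)) t :=
      ((hasDerivAt_id t).smul_const (f - g)).add_const g
    rw [one_smul] at h
    have he : (fun s : ℝ => L s) = fun s : ℝ => s • (f - g) + g := funext hLfun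
    rw [he]
    exact h
  have hderiv : ∀ t : ℝ, L t ∈ S → HasDerivAt (Φ ∘ L) ⟪Φ' (L t), f - g⟫ t := by
    intro t ht
    have hG : HasFDerivAt Φ (InnerProductSpace.toDual ℝ F (Φ' (L t))) (L t) :=
      hdiff (L t) ht
    have := hG.comp_hasDerivAt t (hLderiv t)
    simpa [InnerProductSpace.toDual_apply_apply] using this
  have hd0 : HasDerivAt (Φ ∘ L) ⟪Φ' g, f - g⟫ 0 := by
    have := hderiv 0 (by simpa [hL, AffineMap.lineMap_apply_zero] using hg)
    simpa [hL, AffineMap.lineMap_apply_zero] using this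
  have hd1 : HasDerivAt (Φ ∘ L) ⟪Φ' f, f - g⟫ 1 := by
    have := hderiv 1 (by simpa [hL, AffineMap.lineMap_apply_one] using hf)
    simpa [hL, AffineMap.lineMap_apply_one] using this
  have hle1 : ⟪Φ' g, f - g⟫ ≤ slope (Φ ∘ L) 0 1 :=
    hφconv.le_slope_of_hasDerivAt h0 h1 one_pos hd0
  have hle2 : slope (Φ ∘ L) 0 1 ≤ ⟪Φ' f, f - g⟫ :=
    hφconv.slope_le_of_hasDerivAt h0 h1 one_pos hd1
  rw [inner_sub_left]
  linarith

end Mono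

/-- Metricisation of the functional Bregman divergence. -/
theorem dgsb_sqrt_is_metric
    {F : Type*} [NormedAddCommGroup F] [InnerProductSpace ℝ F] [CompleteSpace F]
    (S : Set F) (hS : IsOpen S) (hSconv : Convex ℝ S) (hSne : S.Nonempty)
    (Φ : F → ℝ) (Φ' : F → F)
    (hdiff : ∀ x ∈ S, HasGradientAt Φ (Φ' x) x)
    (hconv : StrictConvexOn ℝ S Φ)
    (A B : F →L[ℝ] F)
    (hAsa : ∀ x y : F, ⟪A x, y⟫ = ⟪x, A y⟫)
    (hApos : ∀ x : F, x ≠ 0 → 0 < ⟪x, A x⟫)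
    (hBsa : ∀ x y : F, ⟪B x, y⟫ = ⟪x, B y⟫)
    (hBpos : ∀ x : F, x ≠ 0 → 0 < ⟪x, B x⟫)
    (hMpsd : ∀ u v : F, 0 ≤ ⟪u, A u + v⟫ + ⟪v, u + B v⟫) :
    (∀ f ∈ S, ∀ g ∈ S, 0 ≤ Real.sqrt (dgsb Φ Φ' A B f g)) ∧
    (∀ f ∈ S, ∀ g ∈ S,
        Real.sqrt (dgsb Φ Φ' A B f g) = Real.sqrt (dgsb Φ Φ' A B g f)) ∧
    (∀ f ∈ S, ∀ g ∈ S, (Real.sqrt (dgsb Φ Φ' A B f g) = 0 ↔ f = g)) ∧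
    (∀ f ∈ S, ∀ g ∈ S, ∀ h ∈ S,
        Real.sqrt (dgsb Φ Φ' A B f g)
          ≤ Real.sqrt (dgsb Φ Φ' A B f h) + Real.sqrt (dgsb Φ Φ' A B h g)) := by
  have hsymm : ∀ f g : F, dgsb Φ Φ' A B f g = dgsb Φ Φ' A B g f := by
    intro f g
    simp only [dgsb]
    have h1 : ⟪g - f, A (g - f)⟫ = ⟪f - g, A (f - g)⟫ := by
      rw [show g - f = -(f - g) by abel, map_neg, inner_neg_neg]
    have h2 : ⟪Φ' g - Φ' f, B (Φ' g - Φ' f)⟫ = ⟪Φ' f - Φ' g, B (Φ' f - Φ' g)⟫ := by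
      rw [show Φ' g - Φ' f = -(Φ' f - Φ' g) by abel, map_neg, inner_neg_neg]
    rw [h1, h2]; ring
  have hpos : ∀ f ∈ S, ∀ g ∈ S, f ≠ g → 0 < dgsb Φ Φ' A B f g := by
    intro f hf g hg hne
    rw [dgsb_eq_half_bqForm]
    unfold bqForm
    have hu : f - g ≠ 0 := sub_ne_zero_of_ne hne
    have hA : 0 < ⟪f - g, A (f - g)⟫ := hApos _ hu
    have hB : 0 ≤ ⟪Φ' f - Φ' g, B (Φ' f - Φ' g)⟫ := by
      rcases eq_or_ne (Φ' f - Φ' g) 0 with h | h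
      · simp [h]
      · exact (hBpos _ h).le
    have hmono : 0 ≤ ⟪Φ' f - Φ' g, f - g⟫ :=
      grad_mono_of_convexOn Φ Φ' hdiff hconv.convexOn hf hg
    have hcomm : ⟪f - g, Φ' f - Φ' g⟫ = ⟪Φ' f - Φ' g, f - g⟫ := real_inner_comm _ _
    linarith
  refine ⟨fun f _ g _ => Real.sqrt_nonneg _, fun f _ g _ => by rw [hsymm], ?_, ?_⟩
  · intro f hf g hg
    constructor
    · intro h0
      by_contra hne
      have hp := hpos f hf g hg hne
      have : Real.sqrt (dgsb Φ Φ' A B f g) > 0 := Real.sqrt_pos.mpr hp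
      linarith
    · intro h; subst h
      have : dgsb Φ Φ' A B f f = 0 := by simp [dgsb]
      rw [this, Real.sqrt_zero]
  · intro f hf g hg h hh
    set u₁ := f - h with hu₁
    set v₁ := Φ' f - Φ' h with hv₁
    set u₂ := h - g with hu₂
    set v₂ := Φ' h - Φ' g with hv₂
    have hsum1 : f - g = u₁ + (1:ℝ) • u₂ := by rw [one_smul, hu₁, hu₂]; abel
    have hsum2 : Φ' f - Φ' g = v₁ + (1:ℝ) • v₂ := by rw [one_smul, hv₁, hv₂]; abel
    have hexp := bqForm_expand A B hAsa hBsa u₁ v₁ u₂ v₂ 1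
    have hcs := bqForm_cauchy_schwarz A B hAsa hBsa hMpsd u₁ v₁ u₂ v₂
    set a := bqForm A B u₁ v₁ u₁ v₁ with ha
    set c := bqForm A B u₂ v₂ u₂ v₂ with hc
    have hanonneg : 0 ≤ a := bqForm_self_nonneg A B hMpsd u₁ v₁
    have hcnonneg : 0 ≤ c := bqForm_self_nonneg A B hMpsd u₂ v₂
    have key : bqForm A B (f - g) (Φ' f - Φ' g) (f - g) (Φ' f - Φ' g)
        ≤ (Real.sqrt a + Real.sqrt c) ^ 2 := by
      rw [hsum1, hsum2, hexp]
      have hsq : Real.sqrt a ^ 2 = a := Real.sq_sqrt hanonneg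
      have hsq' : Real.sqrt c ^ 2 = c := Real.sq_sqrt hcnonneg
      nlinarith [hcs]
    have hdfg := dgsb_eq_half_bqForm Φ Φ' A B f g
    have hdfh : dgsb Φ Φ' A B f h = (1/2) * a := dgsb_eq_half_bqForm Φ Φ' A B f h
    have hdhg : dgsb Φ Φ' A B h g = (1/2) * c := dgsb_eq_half_bqForm Φ Φ' A B h g
    rw [hdfg, hdfh, hdhg]
    have h2 : ∀ x : ℝ, Real.sqrt ((1/2) * x) = Real.sqrt (1/2) * Real.sqrt x := by
      intro x; rw [← Real.sqrt_mul (by norm_num : (0:ℝ) ≤ 1/2)]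
    rw [h2, h2, h2]
    have hsqrtle : Real.sqrt (bqForm A B (f - g) (Φ' f - Φ' g) (f - g) (Φ' f - Φ' g))
        ≤ Real.sqrt a + Real.sqrt c := by
      calc Real.sqrt (bqForm A B (f - g) (Φ' f - Φ' g) (f - g) (Φ' f - Φ' g))
          ≤ Real.sqrt ((Real.sqrt a + Real.sqrt c) ^ 2) := Real.sqrt_le_sqrt key
        _ = Real.sqrt a + Real.sqrt c := Real.sqrt_sq (by positivity)
    have hhalf : (0:ℝ) ≤ Real.sqrt (1/2) := Real.sqrt_nonneg _
    nlinarith [hsqrtle, hhalf]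
end

section
/- Let H be a real Hilbert space and φ : [0,∞) → ℝ twice continuously differentiable with φ'(0) = 0, φ'(r) > 0 and φ''(r) > 0 for r > 0. Define F(u) = φ(‖u‖) on H, and for R > 0 set λ⊥(r) = φ'(r)/r for r > 0 with λ⊥(0) = φ''(0), λ∥(r) = φ''(r), L(R) = sup over 0 ≤ r ≤ R of max{λ∥(r), λ⊥(r)}, and m(R) = inf over 0 ≤ r ≤ R of min{λ∥(r), λ⊥(r)}. Then for all u, v ∈ H with ‖u‖ ≤ R and ‖v‖ ≤ R, the Bregman divergence of F satisfies (m(R)/2)·‖u − v‖² ≤ d_F(u,v) ≤ (L(R)/2)·‖u − v‖². -/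
/-!
With `a = ‖u‖` and `b = ‖v‖`, the Bregman divergence of `u ↦ φ ‖u‖` is the one-variable Taylor
remainder `φ a - φ b - φ' b (a - b)` plus `λ⊥(b) (a b - ⟪u, v⟫)`, while
`‖u - v‖² = (a - b)² + 2 (a b - ⟪u, v⟫)` with `a b - ⟪u, v⟫ ≥ 0` by Cauchy–Schwarz. The Taylor
remainder lies between `m/2 (a - b)²` and `L/2 (a - b)²` because `m ≤ φ'' ≤ L` on `[0, R]`
(convexity of `φ - m t²/2` and of `L t²/2 - φ`). Finally, `m` and `L` are an honest infimum and
supremum: `φ''` is bounded on `[0, R]` by continuity, and since `φ' 0 = 0` the mean value theorem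
places `λ⊥(r) = φ' r / r` within the same bounds.
-/

open Set
open scoped RealInnerProductSpace

section OneVariable

variable {D : Set ℝ}

theorem ConvexOn.add_mul_sub_le_of_hasDerivWithinAt {f : ℝ → ℝ} {f' x y : ℝ}
    (hfc : ConvexOn ℝ D f) (hx : x ∈ D) (hy : y ∈ D) (hf : HasDerivWithinAt f f' D x) :
    f x + f' * (y - x) ≤ f y := by
  rcases lt_trichotomy x y with hxy | rfl | hyx
  · have := hfc.le_slope_of_hasDerivWithinAt hx hy hxy hf
    rw [slope_def_field, le_div_iff₀ (sub_pos.2 hxy)] at this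
    linarith
  · simp
  · have := hfc.slope_le_of_hasDerivWithinAt hy hx hyx hf
    rw [slope_def_field, div_le_iff₀ (sub_pos.2 hyx)] at this
    linarith

variable {f f' f'' : ℝ → ℝ} {x y : ℝ}

theorem Convex.mul_sub_le_image_sub_of_le_hasDerivWithinAt (hD : Convex ℝ D)
    (hf : ∀ x ∈ D, HasDerivWithinAt f (f' x) D x) {C : ℝ} (hC : ∀ x ∈ D, C ≤ f' x)
    (hx : x ∈ D) (hy : y ∈ D) (hxy : x ≤ y) : C * (y - x) ≤ f y - f x := by
  have hg : ∀ x ∈ D, HasDerivWithinAt (fun t => f t - C * t) (f' x - C) D x := fun x hx =>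
    (hf x hx).sub (((hasDerivWithinAt_id x D).const_mul C).congr_deriv (mul_one C))
  have hmono : MonotoneOn (fun t => f t - C * t) D :=
    monotoneOn_of_hasDerivWithinAt_nonneg hD (fun x hx => (hg x hx).continuousWithinAt)
      (fun x hx => (hg x (interior_subset hx)).mono interior_subset)
      (fun x hx => sub_nonneg.2 (hC x (interior_subset hx)))
  have := hmono hx hy hxy
  simp only at this
  linarith

theorem Convex.image_sub_le_mul_sub_of_hasDerivWithinAt_le (hD : Convex ℝ D)
    (hf : ∀ x ∈ D, HasDerivWithinAt f (f' x) D x) {C : ℝ} (hC : ∀ x ∈ D, f' x ≤ C)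
    (hx : x ∈ D) (hy : y ∈ D) (hxy : x ≤ y) : f y - f x ≤ C * (y - x) := by
  have := hD.mul_sub_le_image_sub_of_le_hasDerivWithinAt (f := -f) (f' := -f')
    (fun x hx => (hf x hx).neg) (fun x hx => neg_le_neg (hC x hx)) hx hy hxy
  simp only [Pi.neg_apply] at this
  linarith

theorem div_mem_Icc_of_hasDerivWithinAt_mem_Icc {R c M r : ℝ}
    (hf : ∀ x ∈ Icc 0 R, HasDerivWithinAt f (f' x) (Icc 0 R) x)
    (hf' : ∀ x ∈ Icc 0 R, f' x ∈ Icc c M) (h0 : f 0 = 0) (hr : r ∈ Ioc 0 R) :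
    f r / r ∈ Icc c M := by
  have h0mem : (0 : ℝ) ∈ Icc 0 R := ⟨le_rfl, hr.1.le.trans hr.2⟩
  have hrmem : r ∈ Icc 0 R := Ioc_subset_Icc_self hr
  have hlow := (convex_Icc 0 R).mul_sub_le_image_sub_of_le_hasDerivWithinAt hf
    (fun x hx => (hf' x hx).1) h0mem hrmem hr.1.le
  have hup := (convex_Icc 0 R).image_sub_le_mul_sub_of_hasDerivWithinAt_le hf
    (fun x hx => (hf' x hx).2) h0mem hrmem hr.1.le
  rw [h0, sub_zero, sub_zero] at hlow hup
  exact ⟨(le_div_iff₀ hr.1).2 hlow, (div_le_iff₀ hr.1).2 hup⟩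

theorem Convex.mul_sq_le_image_sub_sub_of_le_hasDerivWithinAt2 (hD : Convex ℝ D)
    (hf : ∀ x ∈ D, HasDerivWithinAt f (f' x) D x)
    (hf' : ∀ x ∈ D, HasDerivWithinAt f' (f'' x) D x) {m : ℝ} (hm : ∀ x ∈ D, m ≤ f'' x)
    (hx : x ∈ D) (hy : y ∈ D) : m / 2 * (y - x) ^ 2 ≤ f y - f x - f' x * (y - x) := by
  have hg : ∀ x ∈ D, HasDerivWithinAt (fun t => f t - m / 2 * t ^ 2) (f' x - m * x) D x :=
    fun x hx => (hf x hx).sub <| ((hasDerivWithinAt_pow 2 x).const_mul (m / 2)).congr_deriv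
      (by push_cast; ring)
  have hg' : ∀ x ∈ D, HasDerivWithinAt (fun t => f' t - m * t) (f'' x - m) D x := fun x hx =>
    (hf' x hx).sub (((hasDerivWithinAt_id x D).const_mul m).congr_deriv (mul_one m))
  have hconvex : ConvexOn ℝ D (fun t => f t - m / 2 * t ^ 2) :=
    convexOn_of_hasDerivWithinAt2_nonneg hD (fun x hx => (hg x hx).continuousWithinAt)
      (fun x hx => (hg x (interior_subset hx)).mono interior_subset)
      (fun x hx => (hg' x (interior_subset hx)).mono interior_subset)
      (fun x hx => sub_nonneg.2 (hm x (interior_subset hx)))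
  have := hconvex.add_mul_sub_le_of_hasDerivWithinAt hx hy (hg x hx)
  linear_combination this

theorem Convex.image_sub_sub_le_mul_sq_of_hasDerivWithinAt2_le (hD : Convex ℝ D)
    (hf : ∀ x ∈ D, HasDerivWithinAt f (f' x) D x)
    (hf' : ∀ x ∈ D, HasDerivWithinAt f' (f'' x) D x) {L : ℝ} (hL : ∀ x ∈ D, f'' x ≤ L)
    (hx : x ∈ D) (hy : y ∈ D) : f y - f x - f' x * (y - x) ≤ L / 2 * (y - x) ^ 2 := by
  have := hD.mul_sq_le_image_sub_sub_of_le_hasDerivWithinAt2 (f := -f) (f' := -f')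
    (f'' := -f'') (fun x hx => (hf x hx).neg) (fun x hx => (hf' x hx).neg)
    (fun x hx => neg_le_neg (hL x hx)) hx hy
  simp only [Pi.neg_apply] at this
  linarith

end OneVariable

section Envelope

variable {α β : Type*} [ConditionallyCompleteLinearOrder β] {S : Set α} {f g : α → β} {r : α}

theorem csInf_image_min_le {c : β} (hf : ∀ x ∈ S, c ≤ f x) (hg : ∀ x ∈ S, c ≤ g x) (hr : r ∈ S) :
    sInf ((fun x => min (f x) (g x)) '' S) ≤ min (f r) (g r) :=
  csInf_le ⟨c, forall_mem_image.2 fun x hx => le_min (hf x hx) (hg x hx)⟩ (mem_image_of_mem _ hr)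

theorem le_csSup_image_max {M : β} (hf : ∀ x ∈ S, f x ≤ M) (hg : ∀ x ∈ S, g x ≤ M) (hr : r ∈ S) :
    max (f r) (g r) ≤ sSup ((fun x => max (f x) (g x)) '' S) :=
  le_csSup ⟨M, forall_mem_image.2 fun x hx => max_le (hf x hx) (hg x hx)⟩ (mem_image_of_mem _ hr)

end Envelope

section Radial

variable {H : Type*} [NormedAddCommGroup H] [InnerProductSpace ℝ H] {φ φ' : ℝ → ℝ} {u v : H}

theorem norm_sub_sq_eq_sq_sub_norm_add (u v : H) :
    ‖u - v‖ ^ 2 = (‖u‖ - ‖v‖) ^ 2 + 2 * (‖u‖ * ‖v‖ - ⟪u, v⟫) := by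
  rw [norm_sub_sq_real]
  ring

/-- `κ` stands in for `φ' ‖v‖ / ‖v‖`, whose junk value at `v = 0` is harmless because the angular
term `‖u‖ * ‖v‖ - ⟪u, v⟫` then vanishes. -/
theorem radial_bregman_eq (h0 : φ' 0 = 0) {κ : ℝ} (hκ : v ≠ 0 → φ' ‖v‖ / ‖v‖ = κ) :
    φ ‖u‖ - φ ‖v‖ - ⟪(φ' ‖v‖ / ‖v‖) • v, u - v⟫ =
      φ ‖u‖ - φ ‖v‖ - φ' ‖v‖ * (‖u‖ - ‖v‖) + κ * (‖u‖ * ‖v‖ - ⟪u, v⟫) := by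
  rcases eq_or_ne v 0 with rfl | hv
  · simp [h0]
  · have hv' : ‖v‖ ≠ 0 := norm_ne_zero_iff.2 hv
    rw [← hκ hv, real_inner_smul_left, inner_sub_right, real_inner_self_eq_norm_sq,
      real_inner_comm]
    field_simp
    ring

theorem radial_bregman_sandwich (h0 : φ' 0 = 0) {m L κ : ℝ}
    (hκ : v ≠ 0 → φ' ‖v‖ / ‖v‖ = κ) (hmκ : m ≤ κ) (hκL : κ ≤ L)
    (hm : m / 2 * (‖u‖ - ‖v‖) ^ 2 ≤ φ ‖u‖ - φ ‖v‖ - φ' ‖v‖ * (‖u‖ - ‖v‖))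
    (hL : φ ‖u‖ - φ ‖v‖ - φ' ‖v‖ * (‖u‖ - ‖v‖) ≤ L / 2 * (‖u‖ - ‖v‖) ^ 2) :
    m / 2 * ‖u - v‖ ^ 2 ≤ φ ‖u‖ - φ ‖v‖ - ⟪(φ' ‖v‖ / ‖v‖) • v, u - v⟫ ∧
      φ ‖u‖ - φ ‖v‖ - ⟪(φ' ‖v‖ / ‖v‖) • v, u - v⟫ ≤ L / 2 * ‖u - v‖ ^ 2 := by
  have hcs : 0 ≤ ‖u‖ * ‖v‖ - ⟪u, v⟫ := sub_nonneg.2 (real_inner_le_norm u v)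
  rw [radial_bregman_eq h0 hκ, norm_sub_sq_eq_sq_sub_norm_add]
  constructor
  · nlinarith [mul_le_mul_of_nonneg_right hmκ hcs]
  · nlinarith [mul_le_mul_of_nonneg_right hκL hcs]

end Radial

theorem deformed_mmd_sandwich_general
    {H : Type*} [NormedAddCommGroup H] [InnerProductSpace ℝ H]
    (φ φ' φ'' : ℝ → ℝ)
    (hd1 : ∀ r ∈ Set.Ici (0:ℝ), HasDerivWithinAt φ (φ' r) (Set.Ici 0) r)
    (hd2 : ∀ r ∈ Set.Ici (0:ℝ), HasDerivWithinAt φ' (φ'' r) (Set.Ici 0) r)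
    (hcont : ContinuousOn φ'' (Set.Ici 0))
    (h0 : φ' 0 = 0)
    (R : ℝ)
    (lamPerp : ℝ → ℝ) (hlamPerp : ∀ r : ℝ, lamPerp r = if r = 0 then φ'' 0 else φ' r / r)
    (mR LR : ℝ)
    (hm : mR = sInf ((fun r => min (φ'' r) (lamPerp r)) '' Set.Icc 0 R))
    (hL : LR = sSup ((fun r => max (φ'' r) (lamPerp r)) '' Set.Icc 0 R))
    (u v : H) (hu : ‖u‖ ≤ R) (hv : ‖v‖ ≤ R) :
    mR / 2 * ‖u - v‖ ^ 2
        ≤ φ ‖u‖ - φ ‖v‖ - ⟪(φ' ‖v‖ / ‖v‖) • v, u - v⟫ ∧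
      φ ‖u‖ - φ ‖v‖ - ⟪(φ' ‖v‖ / ‖v‖) • v, u - v⟫
        ≤ LR / 2 * ‖u - v‖ ^ 2 := by
  have hsub : Icc 0 R ⊆ Ici 0 := Icc_subset_Ici_self
  have hd1R : ∀ r ∈ Icc 0 R, HasDerivWithinAt φ (φ' r) (Icc 0 R) r :=
    fun r hr => (hd1 r (hsub hr)).mono hsub
  have hd2R : ∀ r ∈ Icc 0 R, HasDerivWithinAt φ' (φ'' r) (Icc 0 R) r :=
    fun r hr => (hd2 r (hsub hr)).mono hsub
  obtain ⟨c, hc⟩ := isCompact_Icc.bddBelow_image (hcont.mono hsub)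
  obtain ⟨M, hM⟩ := isCompact_Icc.bddAbove_image (hcont.mono hsub)
  have hφ'' : ∀ r ∈ Icc 0 R, φ'' r ∈ Icc c M :=
    fun r hr => ⟨hc (mem_image_of_mem _ hr), hM (mem_image_of_mem _ hr)⟩
  have hlam : ∀ r ∈ Icc 0 R, lamPerp r ∈ Icc c M := by
    intro r hr
    rw [hlamPerp]
    split_ifs with hr0
    · exact hφ'' 0 (hr0 ▸ hr)
    · exact div_mem_Icc_of_hasDerivWithinAt_mem_Icc hd2R hφ'' h0 ⟨hr.1.lt_of_ne' hr0, hr.2⟩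
  have hmin : ∀ r ∈ Icc 0 R, mR ≤ min (φ'' r) (lamPerp r) := fun r hr =>
    hm ▸ csInf_image_min_le (fun x hx => (hφ'' x hx).1) (fun x hx => (hlam x hx).1) hr
  have hmax : ∀ r ∈ Icc 0 R, max (φ'' r) (lamPerp r) ≤ LR := fun r hr =>
    hL ▸ le_csSup_image_max (fun x hx => (hφ'' x hx).2) (fun x hx => (hlam x hx).2) hr
  have ha : ‖u‖ ∈ Icc 0 R := ⟨norm_nonneg u, hu⟩
  have hb : ‖v‖ ∈ Icc 0 R := ⟨norm_nonneg v, hv⟩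
  exact radial_bregman_sandwich h0 (κ := lamPerp ‖v‖)
    (fun hv0 => by rw [hlamPerp, if_neg (norm_ne_zero_iff.2 hv0)])
    ((hmin _ hb).trans (min_le_right _ _)) ((le_max_right _ _).trans (hmax _ hb))
    ((convex_Icc 0 R).mul_sq_le_image_sub_sub_of_le_hasDerivWithinAt2 hd1R hd2R
      (fun r hr => (hmin r hr).trans (min_le_left _ _)) hb ha)
    ((convex_Icc 0 R).image_sub_sub_le_mul_sq_of_hasDerivWithinAt2_le hd1R hd2R
      (fun r hr => (le_max_left _ _).trans (hmax r hr)) hb ha)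

/-- Sandwich bounds for the deformed squared MMD: let `φ : [0,∞) → ℝ` be twice continuously
differentiable with `φ'(0) = 0`, `φ'(r) > 0` and `φ''(r) > 0` for `r > 0`, and let
`F(u) = φ(‖u‖)` on a real Hilbert space `H`. With the Hessian eigenvalues
`λ⊥(r) = φ'(r)/r` for `r > 0` (extended by `λ⊥(0) = φ''(0)`) and `λ∥(r) = φ''(r)`, set
`L(R) = sup_{0 ≤ r ≤ R} max{λ∥(r), λ⊥(r)}` and `m(R) = inf_{0 ≤ r ≤ R} min{λ∥(r), λ⊥(r)}`.
Then for all `u, v` with `‖u‖ ≤ R` and `‖v‖ ≤ R`, the Bregman divergence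
`d_F(u,v) = F(u) − F(v) − ⟪∇F(v), u − v⟫` (with `∇F(v) = (φ'(‖v‖)/‖v‖) • v`) satisfies
`(m(R)/2)‖u − v‖² ≤ d_F(u,v) ≤ (L(R)/2)‖u − v‖²`. -/
theorem deformed_mmd_sandwich
    {H : Type*} [NormedAddCommGroup H] [InnerProductSpace ℝ H] [CompleteSpace H]
    (φ φ' φ'' : ℝ → ℝ)
    (hd1 : ∀ r ∈ Set.Ici (0:ℝ), HasDerivWithinAt φ (φ' r) (Set.Ici 0) r)
    (hd2 : ∀ r ∈ Set.Ici (0:ℝ), HasDerivWithinAt φ' (φ'' r) (Set.Ici 0) r)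
    (hcont : ContinuousOn φ'' (Set.Ici 0))
    (h0 : φ' 0 = 0)
    (hpos1 : ∀ r : ℝ, 0 < r → 0 < φ' r)
    (hpos2 : ∀ r : ℝ, 0 < r → 0 < φ'' r)
    (R : ℝ) (hR : 0 < R)
    (lamPerp : ℝ → ℝ) (hlamPerp : ∀ r : ℝ, lamPerp r = if r = 0 then φ'' 0 else φ' r / r)
    (mR LR : ℝ)
    (hm : mR = sInf ((fun r => min (φ'' r) (lamPerp r)) '' Set.Icc 0 R))
    (hL : LR = sSup ((fun r => max (φ'' r) (lamPerp r)) '' Set.Icc 0 R))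
    (u v : H) (hu : ‖u‖ ≤ R) (hv : ‖v‖ ≤ R) :
    mR / 2 * ‖u - v‖ ^ 2
        ≤ φ ‖u‖ - φ ‖v‖ - ⟪(φ' ‖v‖ / ‖v‖) • v, u - v⟫ ∧
      φ ‖u‖ - φ ‖v‖ - ⟪(φ' ‖v‖ / ‖v‖) • v, u - v⟫
        ≤ LR / 2 * ‖u - v‖ ^ 2 :=
  deformed_mmd_sandwich_general φ φ' φ'' hd1 hd2 hcont h0 R lamPerp hlamPerp mR LR hm hL u v hu hv
end

section
/- Let X be a set, D : X × X → [0,∞) a function such that √D is symmetric and satisfies the triangle inequality, and D' : X × X → [0,∞) a function such that (m/2)·D(x,y) ≤ D'(x,y) ≤ (L/2)·D(x,y) for all x, y ∈ X, where 0 < m ≤ L. Let p₀, p̂ ∈ X, let (p_θ)_{θ∈Θ} be a family in X, and let θ̂ ∈ Θ satisfy D'(p_{θ̂}, p̂) ≤ D'(p_θ, p̂) for all θ ∈ Θ. Then for every θ ∈ Θ: √(D'(p_{θ̂}, p₀)) ≤ (L/√(2m))·√(D(p_θ, p₀)) + (√(L/2) + L/√(2m))·√(D(p̂, p₀)). -/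
/-- Universal estimation bound: let `√D` be a symmetric function satisfying the triangle
inequality on `X`, and `D'` a nonnegative discrepancy with
`(m/2)·D(x,y) ≤ D'(x,y) ≤ (L/2)·D(x,y)` for all `x, y` and `0 < m ≤ L`. If `θ̂` minimises
`θ ↦ D'(p_θ, p̂)`, then for every `θ`,
`√D'(p_θ̂, p₀) ≤ (L/√(2m))·√D(p_θ, p₀) + (√(L/2) + L/√(2m))·√D(p̂, p₀)`. -/
theorem universal_estimation_bound
    {X Θ : Type*} (D D' : X → X → ℝ)
    (hDnn : ∀ x y : X, 0 ≤ D x y)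
    (hD'nn : ∀ x y : X, 0 ≤ D' x y)
    (hsym : ∀ x y : X, Real.sqrt (D x y) = Real.sqrt (D y x))
    (htri : ∀ x y z : X, Real.sqrt (D x z) ≤ Real.sqrt (D x y) + Real.sqrt (D y z))
    (m L : ℝ) (hm : 0 < m) (hmL : m ≤ L)
    (hlow : ∀ x y : X, m / 2 * D x y ≤ D' x y)
    (hup : ∀ x y : X, D' x y ≤ L / 2 * D x y)
    (p₀ phat : X) (p : Θ → X) (θhat : Θ)
    (hmin : ∀ θ : Θ, D' (p θhat) phat ≤ D' (p θ) phat)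
    (θ : Θ) :
    Real.sqrt (D' (p θhat) p₀)
      ≤ L / Real.sqrt (2 * m) * Real.sqrt (D (p θ) p₀)
        + (Real.sqrt (L / 2) + L / Real.sqrt (2 * m)) * Real.sqrt (D phat p₀) := by
  have hL0 : 0 ≤ L := hm.le.trans hmL
  -- constant computation
  have eC : Real.sqrt (L / 2) * (Real.sqrt (2 / m) * Real.sqrt (L / 2))
      = L / Real.sqrt (2 * m) := by
    rw [← Real.sqrt_mul (by positivity), ← Real.sqrt_mul (by positivity)]
    have h1 : L / 2 * (2 / m * (L / 2)) = L ^ 2 / (2 * m) := by field_simp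
    rw [h1, Real.sqrt_div (by positivity), Real.sqrt_sq hL0]
  have h1 : Real.sqrt (D' (p θhat) p₀) ≤ Real.sqrt (L / 2) * Real.sqrt (D (p θhat) p₀) := by
    rw [← Real.sqrt_mul (by positivity)]
    exact Real.sqrt_le_sqrt (hup _ _)
  have h3 : Real.sqrt (D (p θhat) phat) ≤ Real.sqrt (2 / m) * Real.sqrt (D' (p θhat) phat) := by
    rw [← Real.sqrt_mul (by positivity)]
    apply Real.sqrt_le_sqrt
    rw [div_mul_eq_mul_div, le_div_iff₀ hm]
    nlinarith [hlow (p θhat) phat]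
  have h4 : Real.sqrt (D' (p θhat) phat) ≤ Real.sqrt (L / 2) * Real.sqrt (D (p θ) phat) := by
    rw [← Real.sqrt_mul (by positivity)]
    exact Real.sqrt_le_sqrt ((hmin θ).trans (hup _ _))
  have h5 : Real.sqrt (D (p θ) phat) ≤ Real.sqrt (D (p θ) p₀) + Real.sqrt (D phat p₀) := by
    calc Real.sqrt (D (p θ) phat)
        ≤ Real.sqrt (D (p θ) p₀) + Real.sqrt (D p₀ phat) := htri _ _ _
      _ = Real.sqrt (D (p θ) p₀) + Real.sqrt (D phat p₀) := by rw [hsym p₀ phat]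
  have hs2m : 0 ≤ Real.sqrt (2 / m) := Real.sqrt_nonneg _
  have hsL2 : 0 ≤ Real.sqrt (L / 2) := Real.sqrt_nonneg _
  calc Real.sqrt (D' (p θhat) p₀)
      ≤ Real.sqrt (L / 2) * Real.sqrt (D (p θhat) p₀) := h1
    _ ≤ Real.sqrt (L / 2) * (Real.sqrt (D (p θhat) phat) + Real.sqrt (D phat p₀)) := by
        gcongr; exact htri _ _ _
    _ ≤ Real.sqrt (L / 2) * (Real.sqrt (2 / m) * Real.sqrt (D' (p θhat) phat)
          + Real.sqrt (D phat p₀)) := by gcongr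
    _ ≤ Real.sqrt (L / 2) * (Real.sqrt (2 / m) * (Real.sqrt (L / 2) * Real.sqrt (D (p θ) phat))
          + Real.sqrt (D phat p₀)) := by gcongr
    _ ≤ Real.sqrt (L / 2) * (Real.sqrt (2 / m) * (Real.sqrt (L / 2)
          * (Real.sqrt (D (p θ) p₀) + Real.sqrt (D phat p₀)))
          + Real.sqrt (D phat p₀)) := by gcongr
    _ = L / Real.sqrt (2 * m) * Real.sqrt (D (p θ) p₀)
        + (Real.sqrt (L / 2) + L / Real.sqrt (2 * m)) * Real.sqrt (D phat p₀) := by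
        rw [← eC]; ring
end
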